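/- arXiv:1712.10222 — 2 statements merged into one kernel-verified Lean document; each statement's English description precedes it below -/
import Mathlib

section
/- Fix positive reals a, r, ℓ, φ, z and β ∈ (0,1). Define u_B := β·z − φ, u_L := β·z − 3·(a·φ·z²·r²/ℓ²)^{1/3}, and the thresholds t_NL := (27·a·r²/(ℓ²·β³))·φ, t_NB := φ/β, t_LB := (ℓ/√(27·a·r²))·φ. Then: (i) if z < min(t_NL, t_NB) then max(u_L, u_B) < 0 (no transfer is profitable); (ii) if t_NL < z < t_LB then u_L > max(0, u_B) (lightning is the strictly best option); (iii) if z > max(t_NB, t_LB) then u_B > max(0, u_L) (blockchain is the strictly best option). -/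
/-!
Cubing removes the cube root from the lightning fee: its cube is `27 a φ z² r² / ℓ²`, which
equals `(β z)³ · (t_NL / z)` and also `φ³ · (z / t_LB)²`. Hence the lightning fee is below `β z`
exactly when `t_NL < z`, and below `φ` exactly when `z < t_LB`, while `β z > φ` means
`z > t_NB`. Each region of the theorem then fixes the signs of `u_L`, `u_B` and `u_L - u_B`.
-/

open Real

noncomputable def lightningFee (a r ℓ φ z : ℝ) : ℝ :=
  3 * (a * φ * z ^ 2 * r ^ 2 / ℓ ^ 2) ^ ((1 : ℝ) / 3)

noncomputable def noneLightningThreshold (a r ℓ φ β : ℝ) : ℝ :=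
  27 * a * r ^ 2 / (ℓ ^ 2 * β ^ 3) * φ

noncomputable def lightningBlockchainThreshold (a r ℓ φ : ℝ) : ℝ :=
  ℓ / √(27 * a * r ^ 2) * φ

section
variable {a r ℓ φ z β : ℝ}

lemma lightningFee_nonneg (ha : 0 ≤ a) (hφ : 0 ≤ φ) : 0 ≤ lightningFee a r ℓ φ z := by
  unfold lightningFee; positivity

lemma lightningFee_pow_three (ha : 0 ≤ a) (hφ : 0 ≤ φ) :
    lightningFee a r ℓ φ z ^ 3 = 27 * (a * φ * z ^ 2 * r ^ 2 / ℓ ^ 2) := by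
  have hcube := rpow_inv_natCast_pow (x := a * φ * z ^ 2 * r ^ 2 / ℓ ^ 2) (n := 3)
    (by positivity) three_ne_zero
  push_cast at hcube
  rw [lightningFee, mul_pow, one_div, hcube]
  norm_num

lemma lightningFee_pow_three_eq_mul_div (ha : 0 ≤ a) (hφ : 0 ≤ φ) (hℓ : ℓ ≠ 0) (hz : z ≠ 0)
    (hβ : β ≠ 0) :
    lightningFee a r ℓ φ z ^ 3 = (β * z) ^ 3 * (noneLightningThreshold a r ℓ φ β / z) := by
  rw [lightningFee_pow_three ha hφ, noneLightningThreshold]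
  field_simp

lemma lightningFee_pow_three_eq_mul_sq (ha : 0 < a) (hr : r ≠ 0) (hℓ : ℓ ≠ 0) (hφ : 0 < φ) :
    lightningFee a r ℓ φ z ^ 3 = φ ^ 3 * (z / lightningBlockchainThreshold a r ℓ φ) ^ 2 := by
  have hs : √(27 * a * r ^ 2) ^ 2 = 27 * a * r ^ 2 := sq_sqrt (by positivity)
  have hs0 : √(27 * a * r ^ 2) ≠ 0 := (sqrt_pos.2 (by positivity)).ne'
  rw [lightningFee_pow_three ha.le hφ.le, lightningBlockchainThreshold]
  field_simp
  rw [hs]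
  ring

lemma lightningFee_lt_mul_iff (ha : 0 ≤ a) (hφ : 0 ≤ φ) (hℓ : ℓ ≠ 0) (hz : 0 < z)
    (hβ : 0 < β) :
    lightningFee a r ℓ φ z < β * z ↔ noneLightningThreshold a r ℓ φ β < z := by
  rw [← pow_lt_pow_iff_left₀ (lightningFee_nonneg ha hφ) (by positivity) three_ne_zero,
    lightningFee_pow_three_eq_mul_div ha hφ hℓ hz.ne' hβ.ne',
    mul_lt_iff_lt_one_right (by positivity), div_lt_one hz]

lemma mul_lt_lightningFee_iff (ha : 0 ≤ a) (hφ : 0 ≤ φ) (hℓ : ℓ ≠ 0) (hz : 0 < z)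
    (hβ : 0 < β) :
    β * z < lightningFee a r ℓ φ z ↔ z < noneLightningThreshold a r ℓ φ β := by
  rw [← pow_lt_pow_iff_left₀ (by positivity) (lightningFee_nonneg ha hφ) three_ne_zero,
    lightningFee_pow_three_eq_mul_div ha hφ hℓ hz.ne' hβ.ne',
    lt_mul_iff_one_lt_right (by positivity), one_lt_div hz]

lemma lightningFee_lt_iff (ha : 0 < a) (hr : r ≠ 0) (hℓ : 0 < ℓ) (hφ : 0 < φ) (hz : 0 ≤ z) :
    lightningFee a r ℓ φ z < φ ↔ z < lightningBlockchainThreshold a r ℓ φ := by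
  have ht : 0 < lightningBlockchainThreshold a r ℓ φ := by
    unfold lightningBlockchainThreshold; positivity
  rw [← pow_lt_pow_iff_left₀ (lightningFee_nonneg ha.le hφ.le) hφ.le three_ne_zero,
    lightningFee_pow_three_eq_mul_sq ha hr hℓ.ne' hφ, mul_lt_iff_lt_one_right (by positivity),
    sq_lt_one_iff₀ (by positivity), div_lt_one ht]

lemma lt_lightningFee_iff (ha : 0 < a) (hr : r ≠ 0) (hℓ : 0 < ℓ) (hφ : 0 < φ) (hz : 0 ≤ z) :
    φ < lightningFee a r ℓ φ z ↔ lightningBlockchainThreshold a r ℓ φ < z := by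
  have ht : 0 < lightningBlockchainThreshold a r ℓ φ := by
    unfold lightningBlockchainThreshold; positivity
  rw [← pow_lt_pow_iff_left₀ hφ.le (lightningFee_nonneg ha.le hφ.le) three_ne_zero,
    lightningFee_pow_three_eq_mul_sq ha hr hℓ.ne' hφ, lt_mul_iff_one_lt_right (by positivity),
    one_lt_sq_iff₀ (by positivity), one_lt_div ht]

end

theorem pair_choice_symmetric_general (a r ℓ φ z β : ℝ)
    (ha : 0 < a) (hr : 0 < r) (hℓ : 0 < ℓ) (hφ : 0 < φ) (hz : 0 < z)
    (hβ0 : 0 < β) :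
    (z < min ((27 * a * r ^ 2 / (ℓ ^ 2 * β ^ 3)) * φ) (φ / β) →
      max (β * z - 3 * (a * φ * z ^ 2 * r ^ 2 / ℓ ^ 2) ^ ((1 : ℝ) / 3))
        (β * z - φ) < 0) ∧
    ((27 * a * r ^ 2 / (ℓ ^ 2 * β ^ 3)) * φ < z ∧
        z < (ℓ / Real.sqrt (27 * a * r ^ 2)) * φ →
      β * z - 3 * (a * φ * z ^ 2 * r ^ 2 / ℓ ^ 2) ^ ((1 : ℝ) / 3) >
        max 0 (β * z - φ)) ∧
    (z > max (φ / β) ((ℓ / Real.sqrt (27 * a * r ^ 2)) * φ) →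
      β * z - φ >
        max 0 (β * z - 3 * (a * φ * z ^ 2 * r ^ 2 / ℓ ^ 2) ^ ((1 : ℝ) / 3))) := by
  refine ⟨fun h => ?_, fun ⟨hNL, hLB⟩ => ?_, fun h => ?_⟩
  · obtain ⟨hNL, hNB⟩ := lt_min_iff.1 h
    have hL := (mul_lt_lightningFee_iff ha.le hφ.le hℓ.ne' hz hβ0).2 hNL
    have hB : β * z < φ := (lt_div_iff₀' hβ0).1 hNB
    exact max_lt (sub_neg.2 hL) (sub_neg.2 hB)
  · have hL := (lightningFee_lt_mul_iff ha.le hφ.le hℓ.ne' hz hβ0).2 hNL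
    have hLφ := (lightningFee_lt_iff ha hr.ne' hℓ hφ hz.le).2 hLB
    exact max_lt (sub_pos.2 hL) (sub_lt_sub_left hLφ _)
  · obtain ⟨hNB, hLB⟩ := max_lt_iff.1 h
    have hB : φ < β * z := (div_lt_iff₀' hβ0).1 hNB
    have hφL := (lt_lightningFee_iff ha hr.ne' hℓ hφ hz.le).2 hLB
    exact max_lt (sub_pos.2 hB) (sub_lt_sub_left hφL _)

/-- Choice of a single pair (symmetric case): below both thresholds no
transfer is profitable; between `t_NL` and `t_LB` lightning is strictly
best; above both `t_NB` and `t_LB` blockchain is strictly best. -/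
theorem pair_choice_symmetric (a r ℓ φ z β : ℝ)
    (ha : 0 < a) (hr : 0 < r) (hℓ : 0 < ℓ) (hφ : 0 < φ) (hz : 0 < z)
    (hβ0 : 0 < β) (hβ1 : β < 1) :
    (z < min ((27 * a * r ^ 2 / (ℓ ^ 2 * β ^ 3)) * φ) (φ / β) →
      max (β * z - 3 * (a * φ * z ^ 2 * r ^ 2 / ℓ ^ 2) ^ ((1 : ℝ) / 3))
        (β * z - φ) < 0) ∧
    ((27 * a * r ^ 2 / (ℓ ^ 2 * β ^ 3)) * φ < z ∧
        z < (ℓ / Real.sqrt (27 * a * r ^ 2)) * φ →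
      β * z - 3 * (a * φ * z ^ 2 * r ^ 2 / ℓ ^ 2) ^ ((1 : ℝ) / 3) >
        max 0 (β * z - φ)) ∧
    (z > max (φ / β) ((ℓ / Real.sqrt (27 * a * r ^ 2)) * φ) →
      β * z - φ >
        max 0 (β * z - 3 * (a * φ * z ^ 2 * r ^ 2 / ℓ ^ 2) ^ ((1 : ℝ) / 3))) :=
  pair_choice_symmetric_general a r ℓ φ z β ha hr hℓ hφ hz hβ0
end

section
/- Fix positive reals z_min, β, ℓ, τ, a, r with β ∈ (0,1), and a natural number n. Define t_LB(φ) := ℓ·φ/√(27·a·r²) and the per-pair demand D(φ) := 3·z_min·(ℓ·a·r²/φ²)^{1/3}·(z_min^{−1/3} − t_LB(φ)^{−1/3}) + ℓ·z_min/t_LB(φ). Then for every φ > 0 one has the identity D(φ) = 3·z_min^{2/3}·(ℓ·a·r²/φ²)^{1/3}, and consequently φ* := z_min·√(27·ℓ·a)·r·(n/(2·τ))^{3/2} satisfies the market-clearing equation (n/2)·D(φ*) = τ. -/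
/-!
At the lightning/blockchain threshold `t = t_LB(φ)` a channel consumes exactly `ℓ/3` records per
day, i.e. `3·(ℓ·a·r²/φ²)^{1/3}·t^{2/3} = ℓ`, because `27·(ℓ·a·r²/φ²)·t² = ℓ³`. Substituting
`ℓ = 3·s·t^{2/3}` into the blockchain term `ℓ·z_min/t` cancels the `t^{-1/3}` part of the
channel term, leaving `3·z_min^{2/3}·s`. With this closed form, cubing the market-clearing
equation turns it into the polynomial identity `(n/2)³·27·z_min²·ℓ·a·r² = τ³·φ*²`.
-/

open Real

lemma rpow_div_natCast_pow {x : ℝ} (hx : 0 ≤ x) (m : ℕ) {n : ℕ} (hn : n ≠ 0) :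
    (x ^ ((m : ℝ) / n)) ^ n = x ^ m := by
  rw [← rpow_mul_natCast hx, div_mul_cancel₀ _ (Nat.cast_ne_zero.2 hn), rpow_natCast]

lemma rpow_one_third_pow_three {x : ℝ} (hx : 0 ≤ x) : (x ^ ((1 : ℝ) / 3)) ^ 3 = x := by
  simpa using rpow_div_natCast_pow hx 1 three_ne_zero

lemma rpow_two_thirds_pow_three {x : ℝ} (hx : 0 ≤ x) : (x ^ ((2 : ℝ) / 3)) ^ 3 = x ^ 2 := by
  simpa using rpow_div_natCast_pow hx 2 three_ne_zero

lemma three_mul_rpow_one_third_mul_rpow_two_thirds {c t ℓ : ℝ} (hc : 0 ≤ c) (ht : 0 ≤ t)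
    (hℓ : 0 ≤ ℓ) (h : 27 * c * t ^ 2 = ℓ ^ 3) :
    3 * c ^ ((1 : ℝ) / 3) * t ^ ((2 : ℝ) / 3) = ℓ := by
  refine (pow_left_inj₀ (by positivity) hℓ three_ne_zero).1 ?_
  calc (3 * c ^ ((1 : ℝ) / 3) * t ^ ((2 : ℝ) / 3)) ^ 3
      = 27 * (c ^ ((1 : ℝ) / 3)) ^ 3 * (t ^ ((2 : ℝ) / 3)) ^ 3 := by ring
    _ = ℓ ^ 3 := by rw [rpow_one_third_pow_three hc, rpow_two_thirds_pow_three ht, ← h]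

lemma channel_demand_cube_mul_threshold_sq {ℓ a r φ : ℝ} (ha : 0 < a) (hr : 0 < r)
    (hφ : 0 < φ) :
    27 * (ℓ * a * r ^ 2 / φ ^ 2) * (ℓ * φ / √(27 * a * r ^ 2)) ^ 2 = ℓ ^ 3 := by
  rw [div_pow, sq_sqrt (by positivity)]
  field_simp

lemma demand_eq_of_threshold {z t s ℓ : ℝ} (hz : 0 < z) (ht : 0 < t)
    (hthreshold : 3 * s * t ^ ((2 : ℝ) / 3) = ℓ) :
    3 * z * s * (z ^ (-(1 : ℝ) / 3) - t ^ (-(1 : ℝ) / 3)) + ℓ * z / t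
      = 3 * z ^ ((2 : ℝ) / 3) * s := by
  have hz_mul : z * z ^ (-(1 : ℝ) / 3) = z ^ ((2 : ℝ) / 3) := by
    rw [← rpow_one_add' hz.le (by norm_num)]
    norm_num
  have ht_mul : t * t ^ (-(1 : ℝ) / 3) = t ^ ((2 : ℝ) / 3) := by
    rw [← rpow_one_add' ht.le (by norm_num)]
    norm_num
  rw [← hthreshold, ← ht_mul, ← hz_mul]
  field_simp
  ring

lemma market_clearing_fee {zmin ℓ τ a r N : ℝ} (hzmin : 0 < zmin) (hℓ : 0 < ℓ) (hτ : 0 < τ)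
    (ha : 0 < a) (hr : 0 < r) (hN : 0 < N) :
    N / 2 * (3 * zmin ^ ((2 : ℝ) / 3) *
      (ℓ * a * r ^ 2 / (zmin * √(27 * ℓ * a) * r * (N / (2 * τ)) ^ ((3 : ℝ) / 2)) ^ 2) ^
        ((1 : ℝ) / 3)) = τ := by
  have hx : 0 < N / (2 * τ) := by positivity
  have hφ_sq : (zmin * √(27 * ℓ * a) * r * (N / (2 * τ)) ^ ((3 : ℝ) / 2)) ^ 2
      = zmin ^ 2 * (27 * ℓ * a) * r ^ 2 * (N / (2 * τ)) ^ 3 := by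
    rw [mul_pow, mul_pow, mul_pow, sq_sqrt (by positivity),
      ← rpow_mul_natCast hx.le, ← rpow_natCast]
    norm_num
  refine (pow_left_inj₀ (by positivity) hτ.le three_ne_zero).1 ?_
  calc (N / 2 * (3 * zmin ^ ((2 : ℝ) / 3) *
        (ℓ * a * r ^ 2 / (zmin * √(27 * ℓ * a) * r * (N / (2 * τ)) ^ ((3 : ℝ) / 2)) ^ 2) ^
          ((1 : ℝ) / 3))) ^ 3
      = (N / 2) ^ 3 * 27 * (zmin ^ ((2 : ℝ) / 3)) ^ 3 *
        ((ℓ * a * r ^ 2 / (zmin * √(27 * ℓ * a) * r * (N / (2 * τ)) ^ ((3 : ℝ) / 2)) ^ 2) ^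
          ((1 : ℝ) / 3)) ^ 3 := by ring
    _ = (N / 2) ^ 3 * 27 * zmin ^ 2 *
        (ℓ * a * r ^ 2 / (zmin ^ 2 * (27 * ℓ * a) * r ^ 2 * (N / (2 * τ)) ^ 3)) := by
      rw [rpow_two_thirds_pow_three hzmin.le, rpow_one_third_pow_three (by positivity), hφ_sq]
    _ = τ ^ 3 := by field_simp

theorem equilibrium_fee_with_lightning_general (zmin ℓ τ a r : ℝ) (n : ℕ)
    (hzmin : 0 < zmin) (hℓ : 0 < ℓ)
    (hτ : 0 < τ) (ha : 0 < a) (hr : 0 < r) (hn : 0 < n) :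
    (∀ φ : ℝ, 0 < φ →
      3 * zmin * (ℓ * a * r ^ 2 / φ ^ 2) ^ ((1 : ℝ) / 3) *
          (zmin ^ (-(1 : ℝ) / 3) -
            (ℓ * φ / Real.sqrt (27 * a * r ^ 2)) ^ (-(1 : ℝ) / 3)) +
        ℓ * zmin / (ℓ * φ / Real.sqrt (27 * a * r ^ 2))
      = 3 * zmin ^ ((2 : ℝ) / 3) * (ℓ * a * r ^ 2 / φ ^ 2) ^ ((1 : ℝ) / 3)) ∧
    ((n : ℝ) / 2) *
        (3 * zmin ^ ((2 : ℝ) / 3) *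
          (ℓ * a * r ^ 2 /
            (zmin * Real.sqrt (27 * ℓ * a) * r * ((n : ℝ) / (2 * τ)) ^ ((3 : ℝ) / 2)) ^ 2) ^
            ((1 : ℝ) / 3))
      = τ := by
  refine ⟨fun φ hφ => ?_, market_clearing_fee hzmin hℓ hτ ha hr (Nat.cast_pos.2 hn)⟩
  have hthreshold := three_mul_rpow_one_third_mul_rpow_two_thirds (by positivity)
    (by positivity) hℓ.le (channel_demand_cube_mul_threshold_sq (ℓ := ℓ) ha hr hφ)
  exact demand_eq_of_threshold hzmin (by positivity) hthreshold

/-- Market-clearing blockchain fee with lightning (symmetric case): the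
per-pair demand simplifies to `3·z_min^{2/3}·(ℓ·a·r²/φ²)^{1/3}`, and the
fee `φ* = z_min·√(27·ℓ·a)·r·(n/(2τ))^{3/2}` clears the market. -/
theorem equilibrium_fee_with_lightning (zmin β ℓ τ a r : ℝ) (n : ℕ)
    (hzmin : 0 < zmin) (hβ0 : 0 < β) (hβ1 : β < 1) (hℓ : 0 < ℓ)
    (hτ : 0 < τ) (ha : 0 < a) (hr : 0 < r) (hn : 0 < n) :
    (∀ φ : ℝ, 0 < φ →
      3 * zmin * (ℓ * a * r ^ 2 / φ ^ 2) ^ ((1 : ℝ) / 3) *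
          (zmin ^ (-(1 : ℝ) / 3) -
            (ℓ * φ / Real.sqrt (27 * a * r ^ 2)) ^ (-(1 : ℝ) / 3)) +
        ℓ * zmin / (ℓ * φ / Real.sqrt (27 * a * r ^ 2))
      = 3 * zmin ^ ((2 : ℝ) / 3) * (ℓ * a * r ^ 2 / φ ^ 2) ^ ((1 : ℝ) / 3)) ∧
    ((n : ℝ) / 2) *
        (3 * zmin ^ ((2 : ℝ) / 3) *
          (ℓ * a * r ^ 2 /
            (zmin * Real.sqrt (27 * ℓ * a) * r * ((n : ℝ) / (2 * τ)) ^ ((3 : ℝ) / 2)) ^ 2) ^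
            ((1 : ℝ) / 3))
      = τ :=
  equilibrium_fee_with_lightning_general zmin ℓ τ a r n hzmin hℓ hτ ha hr hn
end
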